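/- arXiv:0910.5479 — 2 statements merged into one kernel-verified Lean document; each statement's English description precedes it below -/
import Mathlib

section
/- Let σ, θ, μ, ν define a transition datum and suppose 𝒱, 𝒲 are two transitions of type (σ,θ;μ,ν). Then the pointwise intersection 𝒱 ∩ 𝒲, defined by (𝒱∩𝒲)(n) = 𝒱(n) ∩ 𝒲(n) (intersection of Young diagrams, i.e., min of row lengths), is again a transition of type (σ,θ;μ,ν). Consequently, if a minimum transition exists it is unique. -/
/- Half-integers are encoded by integers: `k : ℤ` represents the half-integer `k + 1/2`.
Young diagrams are encoded as weakly decreasing, eventually zero sequences `ℕ → ℕ`. -/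

/-- A Young diagram: a weakly decreasing, eventually zero sequence. -/
def IsYoungSeq (f : ℕ → ℕ) : Prop :=
  (∀ i, f (i + 1) ≤ f i) ∧ ∃ N, ∀ i, N ≤ i → f i = 0

/-- The conjugate (transpose) partition: column lengths. -/
noncomputable def conjSeq (f : ℕ → ℕ) (j : ℕ) : ℕ :=
  Set.ncard {i : ℕ | j < f i}

/-- Row interlacing `≻⁺`. -/
def InterlacePlus (f g : ℕ → ℕ) : Prop :=
  ∀ i : ℕ, g i ≤ f i ∧ f (i + 1) ≤ g i

/-- Column interlacing `≻⁻`. -/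
def InterlaceMinus (f g : ℕ → ℕ) : Prop :=
  ∀ j : ℕ, conjSeq g j ≤ conjSeq f j ∧ conjSeq f (j + 1) ≤ conjSeq g j

/-- `≻^ε` for `ε = ±1`. -/
def InterlaceSgn (ε : ℤ) (f g : ℕ → ℕ) : Prop :=
  if ε = 1 then InterlacePlus f g else InterlaceMinus f g

/-- A transition of type `(σ,θ;μ,ν)`: a map `𝒱 : ℤ → {Young diagrams}` with
`𝒱(n) = ν₋` for `n ≪ 0`, `𝒱(n) = ν₊` for `n ≫ 0`, and for each half-integer `h`
(encoded `k`, so `h ∓ 1/2` are the integers `k`, `k+1`),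
`𝒱(h − μ∘θ(h)/2) ≻^{σ∘θ(h)} 𝒱(h + μ∘θ(h)/2)`. -/
def IsTransition (σ θ μ : ℤ → ℤ) (νm νp : ℕ → ℕ) (V : ℤ → ℕ → ℕ) : Prop :=
  (∀ n : ℤ, IsYoungSeq (V n)) ∧
  (∃ A : ℤ, ∀ n : ℤ, n < A → V n = νm) ∧
  (∃ B : ℤ, ∀ n : ℤ, B < n → V n = νp) ∧
  (∀ k : ℤ, if μ (θ k) = 1 then InterlaceSgn (σ (θ k)) (V k) (V (k + 1))
            else InterlaceSgn (σ (θ k)) (V (k + 1)) (V k))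

namespace IsYoungSeq

variable {f g : ℕ → ℕ}

theorem inf (hf : IsYoungSeq f) (hg : IsYoungSeq g) : IsYoungSeq (f ⊓ g) := by
  obtain ⟨hf_succ, N, hN⟩ := hf
  obtain ⟨hg_succ, M, hM⟩ := hg
  refine ⟨fun i => inf_le_inf (hf_succ i) (hg_succ i), max N M, fun i hi => ?_⟩
  simp [hN i (le_of_max_le_left hi), hM i (le_of_max_le_right hi)]

theorem isLowerSet_setOf_lt (hf : IsYoungSeq f) (j : ℕ) : IsLowerSet {i | j < f i} :=
  fun _ _ hba ha => ha.trans_le (antitone_nat_of_succ_le hf.1 hba)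

theorem finite_setOf_lt (hf : IsYoungSeq f) (j : ℕ) : {i | j < f i}.Finite := by
  obtain ⟨N, hN⟩ := hf.2
  refine (Set.finite_Iio N).subset fun i hi => ?_
  by_contra hiN
  exact Nat.not_lt_zero j (hN i (not_lt.mp hiN) ▸ hi)

/-- For each `j`, the rows of length `> j` form an initial segment of `ℕ`, and of two initial
segments one contains the other. -/
theorem conjSeq_inf (hf : IsYoungSeq f) (hg : IsYoungSeq g) (j : ℕ) :
    conjSeq (f ⊓ g) j = min (conjSeq f j) (conjSeq g j) := by
  have hinter : {i | j < (f ⊓ g) i} = {i | j < f i} ∩ {i | j < g i} :=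
    Set.ext fun _ => lt_inf_iff (a := j)
  rw [conjSeq, conjSeq, conjSeq, hinter]
  rcases (hf.isLowerSet_setOf_lt j).total (hg.isLowerSet_setOf_lt j) with hfg | hgf
  · rw [Set.inter_eq_left.mpr hfg, min_eq_left (Set.ncard_le_ncard hfg (hg.finite_setOf_lt j))]
  · rw [Set.inter_eq_right.mpr hgf, min_eq_right (Set.ncard_le_ncard hgf (hf.finite_setOf_lt j))]

end IsYoungSeq

section Interlace

variable {f f' g g' : ℕ → ℕ}

theorem InterlacePlus.inf (h : InterlacePlus f g) (h' : InterlacePlus f' g') :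
    InterlacePlus (f ⊓ f') (g ⊓ g') :=
  fun i => ⟨inf_le_inf (h i).1 (h' i).1, inf_le_inf (h i).2 (h' i).2⟩

theorem InterlaceMinus.inf (hf : IsYoungSeq f) (hf' : IsYoungSeq f') (hg : IsYoungSeq g)
    (hg' : IsYoungSeq g') (h : InterlaceMinus f g) (h' : InterlaceMinus f' g') :
    InterlaceMinus (f ⊓ f') (g ⊓ g') := by
  intro j
  rw [hf.conjSeq_inf hf', hf.conjSeq_inf hf', hg.conjSeq_inf hg']
  exact ⟨inf_le_inf (h j).1 (h' j).1, inf_le_inf (h j).2 (h' j).2⟩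

theorem InterlaceSgn.inf {ε : ℤ} (hf : IsYoungSeq f) (hf' : IsYoungSeq f') (hg : IsYoungSeq g)
    (hg' : IsYoungSeq g') (h : InterlaceSgn ε f g) (h' : InterlaceSgn ε f' g') :
    InterlaceSgn ε (f ⊓ f') (g ⊓ g') := by
  unfold InterlaceSgn at *
  split_ifs at *
  · exact h.inf h'
  · exact h.inf hf hf' hg hg' h'

end Interlace

theorem IsTransition.inf {σ θ μ : ℤ → ℤ} {νm νp : ℕ → ℕ} {V W : ℤ → ℕ → ℕ}
    (hV : IsTransition σ θ μ νm νp V) (hW : IsTransition σ θ μ νm νp W) :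
    IsTransition σ θ μ νm νp (V ⊓ W) := by
  obtain ⟨hV_young, ⟨A, hVA⟩, ⟨B, hVB⟩, hV_step⟩ := hV
  obtain ⟨hW_young, ⟨A', hWA⟩, ⟨B', hWB⟩, hW_step⟩ := hW
  refine ⟨fun n => (hV_young n).inf (hW_young n), ⟨min A A', fun n hn => ?_⟩,
    ⟨max B B', fun n hn => ?_⟩, fun k => ?_⟩
  · rw [Pi.inf_apply, hVA n (lt_min_iff.mp hn).1, hWA n (lt_min_iff.mp hn).2, inf_idem]
  · rw [Pi.inf_apply, hVB n (max_lt_iff.mp hn).1, hWB n (max_lt_iff.mp hn).2, inf_idem]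
  · have hV_k := hV_step k
    have hW_k := hW_step k
    split_ifs at *
    · exact hV_k.inf (hV_young k) (hW_young k) (hV_young (k + 1)) (hW_young (k + 1)) hW_k
    · exact hV_k.inf (hV_young (k + 1)) (hW_young (k + 1)) (hV_young k) (hW_young k) hW_k

theorem transition_intersection_and_min_unique_general
    (σ θ μ : ℤ → ℤ)
    (νm νp : ℕ → ℕ)
    (V W : ℤ → ℕ → ℕ)
    (hV : IsTransition σ θ μ νm νp V) (hW : IsTransition σ θ μ νm νp W) :
    IsTransition σ θ μ νm νp (fun n i => min (V n i) (W n i)) ∧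
    (∀ V₁ V₂ : ℤ → ℕ → ℕ,
      (IsTransition σ θ μ νm νp V₁ ∧
        ∀ U, IsTransition σ θ μ νm νp U → ∀ n i, V₁ n i ≤ U n i) →
      (IsTransition σ θ μ νm νp V₂ ∧
        ∀ U, IsTransition σ θ μ νm νp U → ∀ n i, V₂ n i ≤ U n i) →
      V₁ = V₂) := by
  refine ⟨hV.inf hW, ?_⟩
  rintro V₁ V₂ ⟨hV₁, hV₁_le⟩ ⟨hV₂, hV₂_le⟩
  funext n i
  exact le_antisymm (hV₁_le V₂ hV₂ n i) (hV₂_le V₁ hV₁ n i)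

/-- The pointwise intersection of two transitions of type `(σ,θ;μ,ν)` is again a
transition of that type; consequently a minimum transition, if it exists, is unique. -/
theorem transition_intersection_and_min_unique (L : ℕ) (hL : 0 < L)
    (σ θ μ : ℤ → ℤ)
    (hσ : ∀ k, σ k = 1 ∨ σ k = -1) (hμ : ∀ k, μ k = 1 ∨ μ k = -1)
    (hθ : Function.Bijective θ) (hθL : ∀ k : ℤ, θ (k + L) = θ k + L)
    (νm νp : ℕ → ℕ) (hνm : IsYoungSeq νm) (hνp : IsYoungSeq νp)
    (V W : ℤ → ℕ → ℕ)
    (hV : IsTransition σ θ μ νm νp V) (hW : IsTransition σ θ μ νm νp W) :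
    IsTransition σ θ μ νm νp (fun n i => min (V n i) (W n i)) ∧
    (∀ V₁ V₂ : ℤ → ℕ → ℕ,
      (IsTransition σ θ μ νm νp V₁ ∧
        ∀ U, IsTransition σ θ μ νm νp U → ∀ n i, V₁ n i ≤ U n i) →
      (IsTransition σ θ μ νm νp V₂ ∧
        ∀ U, IsTransition σ θ μ νm νp U → ∀ n i, V₂ n i ≤ U n i) →
      V₁ = V₂) :=
  transition_intersection_and_min_unique_general σ θ μ νm νp V W hV hW
end

section
/- The generating function identity for the topological vertex of ℂ³ with the staircase partition: the partition function M(q) · ∏_{n=1}^{N} (1 − q^{2n−1})^{−(N+1−n)} equals the specialization of the closed orbifold partition function ∏_{n>0}(1 − q₀ⁿq₁ⁿ)^{−2n} ∏_{n>0}(1 − q₀ⁿq₁^{n+1})^{−n} ∏_{n>N}(1 − q₀ⁿq₁^{n−1})^{−n} at q₀ = q^{−2N+1}, q₁ = q^{2N+1}, for N odd (as formal power series in q). -/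
/-
Modulo `q^{d+1}`, where the coefficient of `q^d` lives, every factor `(1 - q^e)⁻¹` with
`e > d` is `1`, so both sides are products of `(1 - q^e)⁻¹` over `1 ≤ e ≤ d` with some
multiplicities, and it suffices to compare these. An even `e` occurs with multiplicity `e`
on both sides; an odd `e = 2k + 1` occurs `2k + 1 + max(N - k, 0)` times on the left and
`(N + k + 1) + max(k - N, 0)` times on the right.
-/

open PowerSeries Finset

noncomputable def q : PowerSeries ℚ := PowerSeries.X

namespace Finset

variable {ι κ M : Type*} [CommMonoid M] [DecidableEq κ]

theorem prod_pow_comp_eq_prod_pow_sum_fiber (s : Finset ι) (t : Finset κ) (φ : ι → κ)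
    (g : κ → M) (m : ι → ℕ) (h : ∀ i ∈ s, φ i ∉ t → g (φ i) = 1) :
    ∏ i ∈ s, g (φ i) ^ m i = ∏ k ∈ t, g k ^ ∑ i ∈ s with φ i = k, m i := by
  calc ∏ i ∈ s, g (φ i) ^ m i
      = ∏ i ∈ s with φ i ∈ t, g (φ i) ^ m i := by
        refine (prod_filter_of_ne fun i hi hne => ?_).symm
        by_contra hi'
        exact hne (by rw [h i hi hi', one_pow])
    _ = ∏ k ∈ t, ∏ i ∈ s with φ i = k, g (φ i) ^ m i :=
        (prod_fiberwise_eq_prod_filter _ _ _ _).symm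
    _ = ∏ k ∈ t, g k ^ ∑ i ∈ s with φ i = k, m i := by
        refine prod_congr rfl fun k _ => ?_
        rw [← prod_pow_eq_pow_sum]
        exact prod_congr rfl fun i hi => by rw [(mem_filter.1 hi).2]

variable (s : Finset ι) (φ : ι → κ) (m : ι → ℕ) {k : κ}

theorem sum_fiber_eq_ite [DecidableEq ι] {j : ι} (hj : ∀ i ∈ s, φ i = k ↔ i = j) :
    ∑ i ∈ s with φ i = k, m i = if j ∈ s then m j else 0 := by
  rw [filter_congr hj, sum_filter, sum_ite_eq']

theorem sum_fiber_eq_zero (h : ∀ i ∈ s, φ i ≠ k) : ∑ i ∈ s with φ i = k, m i = 0 := by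
  rw [filter_false_of_mem h, sum_empty]

end Finset

theorem staircase_multiplicity_eq (N d e : ℕ) (he : e ∈ Icc 1 d) :
    ∑ n ∈ Icc 1 (d + 1) with n = e, n + ∑ n ∈ Icc 1 N with 2 * n - 1 = e, (N + 1 - n)
      = ∑ n ∈ Icc 1 (d + 1) with 2 * n = e, 2 * n
        + ∑ n ∈ Icc 1 (d + 1) with 2 * n + 2 * N + 1 = e, n
        + ∑ n ∈ Icc (N + 1) (N + d + 1) with 2 * n - 2 * N - 1 = e, n := by
  rw [mem_Icc] at he
  rw [sum_fiber_eq_ite _ _ _ (j := e) fun n _ => Iff.rfl]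
  obtain ⟨k, rfl | rfl⟩ := Nat.even_or_odd' e
  · rw [sum_fiber_eq_zero _ _ _ fun n hn => by rw [mem_Icc] at hn; omega,
      sum_fiber_eq_ite _ _ _ (j := k) fun n _ => by omega,
      sum_fiber_eq_zero _ _ _ fun n _ => by omega,
      sum_fiber_eq_zero _ _ _ fun n hn => by rw [mem_Icc] at hn; omega]
    simp only [mem_Icc]
    split_ifs <;> omega
  · rw [sum_fiber_eq_ite _ _ _ (j := k + 1) fun n hn => by rw [mem_Icc] at hn; omega,
      sum_fiber_eq_zero _ _ _ fun n _ => by omega,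
      sum_fiber_eq_ite _ _ _ (j := k - N) fun n hn => by rw [mem_Icc] at hn; omega,
      sum_fiber_eq_ite _ _ _ (j := N + k + 1) fun n hn => by rw [mem_Icc] at hn; omega]
    simp only [mem_Icc]
    split_ifs <;> omega

theorem prod_staircase_eq {M : Type*} [CommMonoid M] (g : ℕ → M) (N d : ℕ)
    (hg : ∀ e, d < e → g e = 1) :
    (∏ n ∈ Icc 1 (d + 1), g n ^ n) * ∏ n ∈ Icc 1 N, g (2 * n - 1) ^ (N + 1 - n)
      = (∏ n ∈ Icc 1 (d + 1), g (2 * n) ^ (2 * n)) *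
        (∏ n ∈ Icc 1 (d + 1), g (2 * n + 2 * N + 1) ^ n) *
        ∏ n ∈ Icc (N + 1) (N + d + 1), g (2 * n - 2 * N - 1) ^ n := by
  have trivial_outside : ∀ (s : Finset ℕ) (φ : ℕ → ℕ), (∀ n ∈ s, 1 ≤ φ n) →
      ∀ n ∈ s, φ n ∉ Icc 1 d → g (φ n) = 1 := fun s φ hφ n hn hd =>
    hg _ (by have := hφ n hn; rw [mem_Icc] at hd; omega)
  rw [prod_pow_comp_eq_prod_pow_sum_fiber _ (Icc 1 d) (fun n => n) g _
      (trivial_outside _ _ fun n hn => (mem_Icc.1 hn).1),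
    prod_pow_comp_eq_prod_pow_sum_fiber _ (Icc 1 d) (fun n => 2 * n - 1) g _
      (trivial_outside _ _ fun n hn => by rw [mem_Icc] at hn; omega),
    prod_pow_comp_eq_prod_pow_sum_fiber _ (Icc 1 d) (fun n => 2 * n) g _
      (trivial_outside _ _ fun n hn => by rw [mem_Icc] at hn; omega),
    prod_pow_comp_eq_prod_pow_sum_fiber _ (Icc 1 d) (fun n => 2 * n + 2 * N + 1) g _
      (trivial_outside _ _ fun n _ => by omega),
    prod_pow_comp_eq_prod_pow_sum_fiber _ (Icc 1 d) (fun n => 2 * n - 2 * N - 1) g _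
      (trivial_outside _ _ fun n hn => by rw [mem_Icc] at hn; omega),
    ← prod_mul_distrib, ← prod_mul_distrib, ← prod_mul_distrib]
  refine prod_congr rfl fun e he => ?_
  rw [← pow_add, ← pow_add, ← pow_add, staircase_multiplicity_eq N d e he]

namespace PowerSeries

variable {R : Type*} [CommRing R]

theorem coeff_eq_of_mk_span_X_pow_eq {d : ℕ} {f g : R⟦X⟧}
    (h : Ideal.Quotient.mk (Ideal.span {X ^ (d + 1)}) f = Ideal.Quotient.mk _ g) :
    coeff d f = coeff d g := by
  rw [Ideal.Quotient.eq, Ideal.mem_span_singleton, X_pow_dvd_iff] at h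
  simpa [sub_eq_zero] using h d d.lt_succ_self

theorem mk_span_X_pow_inv_one_sub_X_pow {k : Type*} [Field k] {d e : ℕ} (he : d < e) :
    Ideal.Quotient.mk (Ideal.span {(X : k⟦X⟧) ^ (d + 1)}) (1 - X ^ e)⁻¹ = 1 := by
  have hunit : (1 - X ^ e : k⟦X⟧) * (1 - X ^ e)⁻¹ = 1 :=
    PowerSeries.mul_inv_cancel _ (by simp [zero_pow (by omega : e ≠ 0)])
  rw [← map_one (Ideal.Quotient.mk _), Ideal.Quotient.eq, Ideal.mem_span_singleton]
  exact ⟨X ^ (e - d - 1) * (1 - X ^ e)⁻¹, by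
    rw [← mul_assoc, ← pow_add, show d + 1 + (e - d - 1) = e by omega]
    linear_combination hunit⟩

end PowerSeries

theorem nc_vertex_C3_staircase_general (N : ℕ) (d : ℕ) :
    PowerSeries.coeff d
      ((∏ n ∈ Icc 1 (d + 1), ((1 - q ^ n)⁻¹) ^ n) *
        ∏ n ∈ Icc 1 N, ((1 - q ^ (2 * n - 1))⁻¹) ^ (N + 1 - n))
    = PowerSeries.coeff d
      ((∏ n ∈ Icc 1 (d + 1), ((1 - q ^ (2 * n))⁻¹) ^ (2 * n)) *
        (∏ n ∈ Icc 1 (d + 1), ((1 - q ^ (2 * n + 2 * N + 1))⁻¹) ^ n) *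
        ∏ n ∈ Icc (N + 1) (N + d + 1), ((1 - q ^ (2 * n - 2 * N - 1))⁻¹) ^ n) := by
  apply coeff_eq_of_mk_span_X_pow_eq
  simp only [map_mul, map_prod, map_pow]
  exact prod_staircase_eq _ N d fun e he => mk_span_X_pow_inv_one_sub_X_pow he

/-- `M(q)·∏_{n=1}^N (1 − q^{2n−1})^{−(N+1−n)}
  = ∏_{n>0}(1 − q₀ⁿq₁ⁿ)^{−2n} ∏_{n>0}(1 − q₀ⁿq₁^{n+1})^{−n} ∏_{n>N}(1 − q₀ⁿq₁^{n−1})^{−n}`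
at `q₀ = q^{−2N+1}`, `q₁ = q^{2N+1}`, for `N` odd, as formal power series in `q`. -/
theorem nc_vertex_C3_staircase (N : ℕ) (hN : Odd N) (d : ℕ) :
    PowerSeries.coeff d
      ((∏ n ∈ Icc 1 (d + 1), ((1 - q ^ n)⁻¹) ^ n) *
        ∏ n ∈ Icc 1 N, ((1 - q ^ (2 * n - 1))⁻¹) ^ (N + 1 - n))
    = PowerSeries.coeff d
      ((∏ n ∈ Icc 1 (d + 1), ((1 - q ^ (2 * n))⁻¹) ^ (2 * n)) *
        (∏ n ∈ Icc 1 (d + 1), ((1 - q ^ (2 * n + 2 * N + 1))⁻¹) ^ n) *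
        ∏ n ∈ Icc (N + 1) (N + d + 1), ((1 - q ^ (2 * n - 2 * N - 1))⁻¹) ^ n) :=
  nc_vertex_C3_staircase_general N d
end
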